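/- arXiv:2605.29761 — 5 statements merged into one kernel-verified Lean document; each statement's English description precedes it below -/
import Mathlib

section
/- Let K ≥ 2 and let O_1, …, O_K be subsets of ℝ³ = EuclideanSpace ℝ (Fin 3), each of which is nonempty, not equal to all of ℝ³, and regular closed (O_k = closure (interior O_k)). Let s_k denote the signed distance function of O_k and for p ∈ ℝ³ write u(p) = (s_1(p), …, s_K(p)) : Fin K → ℝ. Then the following are equivalent: (i) for every p ∈ ℝ³, min⁽²⁾(u(p)) ≥ 0; (ii) for every p ∈ ℝ³, min⁽¹⁾(u(p)) + min⁽²⁾(u(p)) ≥ 0. -/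
open Classical in
/-- Signed distance function of a set `O ⊆ ℝ³`: negative inside `O`, positive outside. -/
noncomputable def sdf (O : Set (EuclideanSpace ℝ (Fin 3))) (p : EuclideanSpace ℝ (Fin 3)) : ℝ :=
  if p ∈ O then -(Metric.infDist p (frontier O)) else Metric.infDist p (frontier O)

/-- Smallest entry of a vector `d : Fin K → ℝ` (for `K ≥ 1`). -/
noncomputable def min1 {K : ℕ} (d : Fin K → ℝ) : ℝ := ⨅ i, d i

/-- Second smallest entry of a vector `d : Fin K → ℝ` (for `K ≥ 2`), expressed as the
minimum over pairs of distinct indices of the max of the two corresponding entries. -/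
noncomputable def min2 {K : ℕ} (d : Fin K → ℝ) : ℝ :=
  ⨅ p : {q : Fin K × Fin K // q.1 ≠ q.2}, max (d p.val.1) (d p.val.2)

/-!
Since `min1 ≤ min2`, (ii) gives `2 min2 ≥ min1 + min2 ≥ 0`. Conversely, `min2 ≥ 0` everywhere
forces the interiors of the `O k` to be pairwise disjoint, because the signed distance is negative
on an interior. At a point `p` whose smallest entry `s_i(p) = -r` is negative, `p` lies in the
interior of `O i` together with the ball of radius `r` around it; every other `O j`, being the
closure of its interior, misses that ball, so `s_j(p) ≥ r` and hence `min2 ≥ r = -min1`.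
-/

open Metric Set

section MinEntries

variable {K : ℕ} (d : Fin K → ℝ)

instance {α : Type*} [Nontrivial α] : Nonempty {q : α × α // q.1 ≠ q.2} :=
  let ⟨a, b, hab⟩ := exists_pair_ne α
  ⟨⟨(a, b), hab⟩⟩

lemma min1_eq_of_forall_le {i : Fin K} (h : ∀ j, d i ≤ d j) : min1 d = d i :=
  IsLeast.csInf_eq ⟨mem_range_self i, forall_mem_range.2 h⟩

lemma min2_le_max {i j : Fin K} (hij : i ≠ j) : min2 d ≤ max (d i) (d j) :=
  ciInf_le (Finite.bddBelow_range _) (⟨(i, j), hij⟩ : {q : Fin K × Fin K // q.1 ≠ q.2})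

variable [Nontrivial (Fin K)]

lemma min1_le_min2 : min1 d ≤ min2 d :=
  le_ciInf fun q => (ciInf_le (Finite.bddBelow_range d) q.val.1).trans (le_max_left _ _)

lemma le_min2_of_forall_ne {i : Fin K} {c : ℝ} (h : ∀ j, j ≠ i → c ≤ d j) : c ≤ min2 d :=
  le_ciInf fun ⟨⟨a, b⟩, hab⟩ =>
    if ha : a = i then le_max_of_le_right (h b fun hb => hab (ha.trans hb.symm))
    else le_max_of_le_left (h a ha)

end MinEntries

lemma ball_infDist_frontier_subset_interior {E : Type*} [NormedAddCommGroup E]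
    [NormedSpace ℝ E] {s : Set E} {x : E} (hx : x ∈ interior s) :
    ball x (infDist x (frontier s)) ⊆ interior s := by
  rcases (infDist_nonneg (x := x) (s := frontier s)).eq_or_lt with h | h
  · simp [← h]
  refine isPreconnected_ball.subset_of_closure_inter_subset isOpen_interior
    ⟨x, mem_ball_self h, hx⟩ fun y ⟨hyc, hyb⟩ => ?_
  by_contra hyi
  exact ball_infDist_subset_compl hyb ⟨closure_mono interior_subset hyc, hyi⟩

section SignedDistance

variable {O A B : Set (EuclideanSpace ℝ (Fin 3))} {p : EuclideanSpace ℝ (Fin 3)}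

lemma sdf_of_mem (hp : p ∈ O) : sdf O p = -infDist p (frontier O) := if_pos hp

lemma sdf_of_notMem (hp : p ∉ O) : sdf O p = infDist p (frontier O) := if_neg hp

lemma sdf_neg_of_mem_interior (hO : (frontier O).Nonempty) (hp : p ∈ interior O) :
    sdf O p < 0 := by
  rw [sdf_of_mem (interior_subset hp), neg_lt_zero]
  exact (isClosed_frontier.notMem_iff_infDist_pos hO).1 fun h => h.2 hp

lemma sdf_nonneg_of_notMem_interior (hp : p ∉ interior O) : 0 ≤ sdf O p := by
  by_cases h : p ∈ O
  · have hpf : p ∈ frontier O := ⟨subset_closure h, hp⟩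
    rw [sdf_of_mem h, infDist_zero_of_mem hpf, neg_zero]
  · rw [sdf_of_notMem h]
    exact infDist_nonneg

lemma neg_sdf_le_sdf_of_disjoint_interior (hB : B ⊆ closure (interior B))
    (hfB : (frontier B).Nonempty) (hAB : Disjoint (interior A) (interior B))
    (hp : p ∈ interior A) : -sdf A p ≤ sdf B p := by
  have hAB' : Disjoint (interior A) (closure B) :=
    (hAB.closure_right isOpen_interior).mono_right (closure_minimal hB isClosed_closure)
  have hball : Disjoint (ball p (infDist p (frontier A))) (closure B) :=
    hAB'.mono_left (ball_infDist_frontier_subset_interior hp)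
  rw [sdf_of_mem (interior_subset hp), neg_neg,
    sdf_of_notMem fun h => hAB'.notMem_of_mem_left hp (subset_closure h)]
  exact (le_infDist hfB).2 fun y hy => not_lt.1 fun hlt =>
    disjoint_left.1 hball (mem_ball'.2 hlt) (frontier_subset_closure hy)

end SignedDistance

section Family

variable {K : ℕ} {O : Fin K → Set (EuclideanSpace ℝ (Fin 3))}

lemma disjoint_interior_of_min2_sdf_nonneg (hO : ∀ k, (frontier (O k)).Nonempty)
    (H : ∀ p, 0 ≤ min2 fun k => sdf (O k) p) {i j : Fin K} (hij : i ≠ j) :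
    Disjoint (interior (O i)) (interior (O j)) :=
  disjoint_left.2 fun p hi hj => (H p).not_gt <| (min2_le_max _ hij).trans_lt <|
    max_lt (sdf_neg_of_mem_interior (hO i) hi) (sdf_neg_of_mem_interior (hO j) hj)

lemma min1_add_min2_sdf_nonneg [Nontrivial (Fin K)] (hreg : ∀ k, O k ⊆ closure (interior (O k)))
    (hO : ∀ k, (frontier (O k)).Nonempty) (H : ∀ p, 0 ≤ min2 fun k => sdf (O k) p)
    (p : EuclideanSpace ℝ (Fin 3)) :
    0 ≤ min1 (fun k => sdf (O k) p) + min2 fun k => sdf (O k) p := by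
  set d := fun k => sdf (O k) p
  obtain ⟨i, hi⟩ := Finite.exists_min d
  rw [min1_eq_of_forall_le d hi]
  by_cases hp : p ∈ interior (O i)
  · have : -d i ≤ min2 d := le_min2_of_forall_ne d fun j hj =>
      neg_sdf_le_sdf_of_disjoint_interior (hreg j) (hO j)
        (disjoint_interior_of_min2_sdf_nonneg hO H hj.symm) hp
    linarith
  · linarith [sdf_nonneg_of_notMem_interior hp, H p]

end Family

theorem constraint_equivalence {K : ℕ} (hK : 2 ≤ K)
    (O : Fin K → Set (EuclideanSpace ℝ (Fin 3)))
    (hne : ∀ k, (O k).Nonempty) (hnu : ∀ k, O k ≠ Set.univ)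
    (hreg : ∀ k, O k = closure (interior (O k))) :
    (∀ p : EuclideanSpace ℝ (Fin 3), min2 (fun i => sdf (O i) p) ≥ 0) ↔
    (∀ p : EuclideanSpace ℝ (Fin 3),
      min1 (fun i => sdf (O i) p) + min2 (fun i => sdf (O i) p) ≥ 0) := by
  have : Nontrivial (Fin K) := Fin.nontrivial_iff_two_le.2 hK
  have hfrontier : ∀ k, (frontier (O k)).Nonempty :=
    fun k => nonempty_frontier_iff.2 ⟨hne k, hnu k⟩
  refine ⟨fun H => min1_add_min2_sdf_nonneg (fun k => (hreg k).le) hfrontier H, fun H p => ?_⟩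
  linarith [H p, min1_le_min2 fun i => sdf (O i) p]
end

section
/- Let A and B be subsets of ℝ³ = EuclideanSpace ℝ (Fin 3), each nonempty, not equal to all of ℝ³, and regular closed (equal to the closure of its interior), and suppose interior A ∩ interior B = ∅. Then for every point p ∈ ℝ³, sdf_A(p) + sdf_B(p) ≥ 0. -/
/-- If `p ∈ A` and the interiors of `A` and `B` are disjoint (with `B` regular closed,
nonempty, proper), then the distance from `p` to `frontier A` is at most the distance to
`frontier B`. -/
lemma sdf_aux {A B : Set (EuclideanSpace ℝ (Fin 3))}
    (hBne : B.Nonempty) (hBnu : B ≠ Set.univ) (hBreg : B = closure (interior B))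
    (hdisj : interior A ∩ interior B = ∅) {p : EuclideanSpace ℝ (Fin 3)} (hp : p ∈ A) :
    Metric.infDist p (frontier A) ≤ Metric.infDist p (frontier B) := by
  set r := Metric.infDist p (frontier A) with hr
  rcases le_or_gt r 0 with h | h
  · exact h.trans Metric.infDist_nonneg
  · have hfBne : (frontier B).Nonempty := nonempty_frontier_iff.mpr ⟨hBne, hBnu⟩
    have hpf : p ∉ frontier A := by
      intro hmem
      rw [hr, Metric.infDist_zero_of_mem hmem] at h
      exact lt_irrefl 0 h
    have hpint : p ∈ interior A := by
      have hpc : p ∈ closure A := subset_closure hp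
      rw [frontier, Set.mem_diff] at hpf
      tauto
    -- the open ball of radius r around p lies in the interior of A
    have hsub : Metric.ball p r ⊆ interior A ∪ (closure A)ᶜ := by
      intro x hx
      have hxf : x ∉ frontier A := by
        intro hxf
        have h1 : r ≤ dist p x := Metric.infDist_le_dist_of_mem hxf
        rw [Metric.mem_ball, dist_comm] at hx
        linarith
      rw [frontier, Set.mem_diff, not_and_or, not_not] at hxf
      rcases hxf with h1 | h2
      · exact Or.inr h1
      · exact Or.inl h2
    have hball : Metric.ball p r ⊆ interior A :=
      IsPreconnected.subset_left_of_subset_union isOpen_interior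
        isClosed_closure.isOpen_compl
        (disjoint_compl_right.mono_left (interior_subset.trans subset_closure))
        hsub ⟨p, Metric.mem_ball_self h, hpint⟩ (convex_ball p r).isPreconnected
    -- every point of `frontier B` is at distance ≥ r from p
    by_contra hcon
    push_neg at hcon
    obtain ⟨q, hq, hqd⟩ := (Metric.infDist_lt_iff hfBne).mp hcon
    have hq1 : q ∈ Metric.ball p r := by rwa [Metric.mem_ball, dist_comm]
    have hq2 : q ∈ interior A := hball hq1
    have hq3 : q ∈ closure (interior B) := by
      have : q ∈ closure B := frontier_subset_closure hq
      rwa [hBreg, closure_closure] at this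
    obtain ⟨y, hy1, hy2⟩ := mem_closure_iff.mp hq3 (interior A) isOpen_interior hq2
    exact absurd (hdisj ▸ (⟨hy1, hy2⟩ : y ∈ interior A ∩ interior B)) (Set.notMem_empty y)

theorem sdf_add_nonneg_of_disjoint_interiors (A B : Set (EuclideanSpace ℝ (Fin 3)))
    (hAne : A.Nonempty) (hAnu : A ≠ Set.univ) (hAreg : A = closure (interior A))
    (hBne : B.Nonempty) (hBnu : B ≠ Set.univ) (hBreg : B = closure (interior B))
    (hdisj : interior A ∩ interior B = ∅) :
    ∀ p : EuclideanSpace ℝ (Fin 3), sdf A p + sdf B p ≥ 0 := by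
  intro p
  have hdisj' : interior B ∩ interior A = ∅ := by rwa [Set.inter_comm]
  unfold sdf
  by_cases hA : p ∈ A <;> by_cases hB : p ∈ B <;> simp only [hA, hB, if_true, if_false, if_pos, if_neg]
  · -- p ∈ A ∩ B : both distances are zero
    have hdA : Metric.infDist p (frontier A) = 0 := by
      rcases (frontier A).eq_empty_or_nonempty with he | _
      · simp [he, Metric.infDist_empty]
      · apply Metric.infDist_zero_of_mem
        by_contra hpf
        have hpint : p ∈ interior A := by
          have hpc : p ∈ closure A := subset_closure hA
          rw [frontier, Set.mem_diff] at hpf; tauto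
        have hpB : p ∈ closure (interior B) := by rw [← hBreg]; exact hB
        obtain ⟨y, hy1, hy2⟩ := mem_closure_iff.mp hpB (interior A) isOpen_interior hpint
        exact absurd (hdisj ▸ (⟨hy1, hy2⟩ : y ∈ interior A ∩ interior B)) (Set.notMem_empty y)
    have hdB : Metric.infDist p (frontier B) = 0 := by
      rcases (frontier B).eq_empty_or_nonempty with he | _
      · simp [he, Metric.infDist_empty]
      · apply Metric.infDist_zero_of_mem
        by_contra hpf
        have hpint : p ∈ interior B := by
          have hpc : p ∈ closure B := subset_closure hB
          rw [frontier, Set.mem_diff] at hpf; tauto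
        have hpA : p ∈ closure (interior A) := by rw [← hAreg]; exact hA
        obtain ⟨y, hy1, hy2⟩ := mem_closure_iff.mp hpA (interior B) isOpen_interior hpint
        exact absurd (hdisj ▸ (⟨hy2, hy1⟩ : y ∈ interior A ∩ interior B)) (Set.notMem_empty y)
    rw [hdA, hdB]; norm_num
  · -- p ∈ A, p ∉ B
    have := sdf_aux hBne hBnu hBreg hdisj hA
    linarith
  · -- p ∉ A, p ∈ B
    have := sdf_aux hAne hAnu hAreg hdisj' hB
    linarith
  · -- p ∉ A, p ∉ B
    have h1 := Metric.infDist_nonneg (x := p) (s := frontier A)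
    have h2 := Metric.infDist_nonneg (x := p) (s := frontier B)
    linarith
end

section
/- Let K ≥ 2 and let d₁, d₂ : Fin K → ℝ satisfy min⁽¹⁾(d₁) + min⁽²⁾(d₁) ≥ 0 and min⁽¹⁾(d₂) + min⁽²⁾(d₂) ≥ 0. Then for every α ∈ [0, 1], the linear interpolation d_α = α • d₁ + (1 − α) • d₂ satisfies min⁽¹⁾(d_α) + min⁽²⁾(d_α) ≥ 0. -/
lemma min1_le {K : ℕ} [NeZero K] (d : Fin K → ℝ) (i : Fin K) : min1 d ≤ d i :=
  ciInf_le (Set.Finite.bddBelow (Set.finite_range d)) i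

lemma min2_le {K : ℕ} (d : Fin K → ℝ) {i j : Fin K} (h : i ≠ j) :
    min2 d ≤ max (d i) (d j) := by
  have := ciInf_le (Set.Finite.bddBelow
    (Set.finite_range (fun p : {q : Fin K × Fin K // q.1 ≠ q.2} =>
      max (d p.val.1) (d p.val.2)))) ⟨(i, j), h⟩
  exact this

lemma sum_le {K : ℕ} [NeZero K] (d : Fin K → ℝ) {i j : Fin K} (h : i ≠ j) :
    min1 d + min2 d ≤ d i + d j := by
  rcases le_total (d i) (d j) with hle | hle
  · have := min1_le d i
    have := min2_le d h
    have : max (d i) (d j) = d j := max_eq_right hle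
    linarith [min1_le d i, min2_le d h]
  · have : max (d i) (d j) = d i := max_eq_left hle
    linarith [min1_le d j, min2_le d h]

lemma exists_pair {K : ℕ} (hK : 2 ≤ K) (d : Fin K → ℝ) :
    ∃ i j : Fin K, i ≠ j ∧ d i + d j ≤ min1 d + min2 d := by
  haveI : NeZero K := ⟨by omega⟩
  obtain ⟨i, hi⟩ := Finite.exists_min d
  haveI : Nonempty {q : Fin K × Fin K // q.1 ≠ q.2} :=
    ⟨⟨(⟨0, by omega⟩, ⟨1, by omega⟩), by simp [Fin.ext_iff]⟩⟩
  obtain ⟨p, hp⟩ := Finite.exists_min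
    (fun p : {q : Fin K × Fin K // q.1 ≠ q.2} => max (d p.val.1) (d p.val.2))
  have h1 : min1 d = d i := le_antisymm (min1_le d i) (le_ciInf hi)
  have h2 : min2 d = max (d p.val.1) (d p.val.2) :=
    le_antisymm (min2_le d p.prop) (le_ciInf hp)
  -- pick j ∈ {p.1, p.2} with j ≠ i
  by_cases hip : i = p.val.1
  · refine ⟨i, p.val.2, by rw [hip]; exact p.prop, ?_⟩
    rw [h1, h2]
    have : d p.val.2 ≤ max (d p.val.1) (d p.val.2) := le_max_right _ _
    linarith
  · refine ⟨i, p.val.1, hip, ?_⟩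
    rw [h1, h2]
    have : d p.val.1 ≤ max (d p.val.1) (d p.val.2) := le_max_left _ _
    linarith

theorem mdf_constraint_linear_interpolation {K : ℕ} (hK : 2 ≤ K) (d₁ d₂ : Fin K → ℝ)
    (h₁ : min1 d₁ + min2 d₁ ≥ 0) (h₂ : min1 d₂ + min2 d₂ ≥ 0) :
    ∀ α ∈ Set.Icc (0 : ℝ) 1,
      min1 (α • d₁ + (1 - α) • d₂) + min2 (α • d₁ + (1 - α) • d₂) ≥ 0 := by
  intro α hα
  haveI : NeZero K := ⟨by omega⟩
  obtain ⟨hα0, hα1⟩ := hα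
  obtain ⟨i, j, hij, hle⟩ := exists_pair hK (α • d₁ + (1 - α) • d₂)
  have e1 : min1 d₁ + min2 d₁ ≤ d₁ i + d₁ j := sum_le d₁ hij
  have e2 : min1 d₂ + min2 d₂ ≤ d₂ i + d₂ j := sum_le d₂ hij
  have hv : (α • d₁ + (1 - α) • d₂) i + (α • d₁ + (1 - α) • d₂) j
      = α * (d₁ i + d₁ j) + (1 - α) * (d₂ i + d₂ j) := by
    simp [Pi.add_apply, Pi.smul_apply, smul_eq_mul]; ring
  nlinarith [mul_nonneg hα0 (le_trans h₁ e1), mul_nonneg (by linarith : (0:ℝ) ≤ 1 - α) (le_trans h₂ e2)]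
end

section
/- Let K ≥ 2, let p, q : Fin K → ℝ, and let i, j be distinct indices with p i < 0, q j < 0, p i + p j ≥ 0 and q i + q j ≥ 0. Then p j > 0 and q i > 0, the quantities α_i = −(p i)/(q i − p i) and α_j = −(p j)/(q j − p j) are well defined with 0 < α_i < 1 and 0 < α_j < 1, and α_i ≤ α_j. In particular, along the linearly interpolated segment d(α) = (1 − α) • p + α • q, the zero crossing of coordinate i occurs no later than the zero crossing of coordinate j, so the two implied surfaces do not cross. -/
theorem zero_crossings_do_not_cross {K : ℕ} (hK : 2 ≤ K) (p q : Fin K → ℝ)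
    (i j : Fin K) (hij : i ≠ j)
    (hpi : p i < 0) (hqj : q j < 0) (hp : p i + p j ≥ 0) (hq : q i + q j ≥ 0) :
    0 < p j ∧ 0 < q i ∧
    q i - p i ≠ 0 ∧ q j - p j ≠ 0 ∧
    0 < -(p i) / (q i - p i) ∧ -(p i) / (q i - p i) < 1 ∧
    0 < -(p j) / (q j - p j) ∧ -(p j) / (q j - p j) < 1 ∧
    -(p i) / (q i - p i) ≤ -(p j) / (q j - p j) := by
  have hpj : 0 < p j := by linarith
  have hqi : 0 < q i := by linarith
  have hdi : 0 < q i - p i := by linarith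
  have hdj : 0 < p j - q j := by linarith
  have hrw : -(p j) / (q j - p j) = p j / (p j - q j) := by
    rw [show q j - p j = -(p j - q j) by ring, div_neg, neg_div, neg_neg]
  refine ⟨hpj, hqi, by linarith, by linarith, ?_, ?_, ?_, ?_, ?_⟩
  · exact div_pos (by linarith) hdi
  · rw [div_lt_one hdi]; linarith
  · rw [hrw]; positivity
  · rw [hrw, div_lt_one hdj]; linarith
  · rw [hrw, div_le_div_iff₀ hdi hdj]
    nlinarith [mul_le_mul (by linarith : -(p i) ≤ p j) (by linarith : -(q j) ≤ q i) (by linarith) hpj.le]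
end

section
/- Let K ≥ 2 and u ∈ EuclideanSpace ℝ (Fin K). Consider the feasible set F of all d ∈ EuclideanSpace ℝ (Fin K) such that (a) d i + d j ≥ 0 for all distinct indices i ≠ j, and (b) d i − d j = u i − u j for all indices i, j. Then d* = Shift-All(u) belongs to F, and for every d ∈ F one has ‖d* − u‖ ≤ ‖d − u‖, with equality only if d = d*. That is, Shift-All(u) is the unique minimizer of ‖d − u‖² over F. -/
/-- The Shift-All map on `EuclideanSpace ℝ (Fin K)`:
shifts every entry by `max 0 (-(min1 u + min2 u)/2)`. -/
noncomputable def shiftAll {K : ℕ} (u : EuclideanSpace ℝ (Fin K)) : EuclideanSpace ℝ (Fin K) :=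
  WithLp.toLp 2 (fun k => u k + max 0 (-(min1 (fun i => u i) + min2 (fun i => u i)) / 2))

/-!
The conditions `d i - d j = u i - u j` say exactly that `d = u + t • 1` for a scalar `t`,
and then `‖d - u‖ = |t| √K`. Since `min1 u + min2 u` is the smallest sum of two entries of `u`
at distinct indices, the pairwise conditions `d i + d j ≥ 0` amount to `t ≥ -(min1 u + min2 u)/2`.
So the problem is to minimise `|t|` over a half-line `t ≥ a`, whose unique solution is
`t = max 0 a`: the shift used by Shift-All.
-/

lemma max_zero_le_abs_of_le {a t : ℝ} (h : a ≤ t) : max 0 a ≤ |t| :=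
  max_le (abs_nonneg t) (h.trans (le_abs_self t))

lemma eq_max_zero_of_abs_eq {a t : ℝ} (h : a ≤ t) (habs : max 0 a = |t|) : t = max 0 a := by
  rcases le_total 0 t with ht | ht
  · rw [habs, abs_of_nonneg ht]
  · have : max 0 a ≤ 0 := (max_le_max le_rfl h).trans_eq (max_eq_left ht)
    rw [habs, abs_of_nonpos ht] at this ⊢
    linarith

lemma EuclideanSpace.norm_sub_eq_abs_mul_sqrt_card {ι : Type*} [Fintype ι]
    {d u : EuclideanSpace ℝ ι} {t : ℝ} (h : ∀ k, d k = u k + t) :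
    ‖d - u‖ = |t| * √(Fintype.card ι) := by
  have hsq : ∀ k, ‖(d - u) k‖ ^ 2 = t ^ 2 := fun k => by
    rw [PiLp.sub_apply, h k, add_sub_cancel_left, Real.norm_eq_abs, sq_abs]
  rw [EuclideanSpace.norm_eq, Finset.sum_congr rfl fun k _ => hsq k, Finset.sum_const,
    Finset.card_univ, nsmul_eq_mul, mul_comm, Real.sqrt_mul (by positivity), Real.sqrt_sq_eq_abs]

section MinPairSum

variable {K : ℕ} (v : Fin K → ℝ)

lemma min1_add_min2_le_add {i j : Fin K} (hij : i ≠ j) : min1 v + min2 v ≤ v i + v j := by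
  have h1 : min1 v ≤ min (v i) (v j) :=
    le_min (ciInf_le (Finite.bddBelow_range v) i) (ciInf_le (Finite.bddBelow_range v) j)
  have h2 : min2 v ≤ max (v i) (v j) :=
    ciInf_le (Finite.bddBelow_range _) (⟨(i, j), hij⟩ : {q : Fin K × Fin K // q.1 ≠ q.2})
  linarith [min_add_max (v i) (v j)]

/-- Take `i` minimising `v`, and `j` minimising `v` off `i`. -/
lemma exists_ne_add_le_min1_add_min2 (hK : 2 ≤ K) :
    ∃ i j : Fin K, i ≠ j ∧ v i + v j ≤ min1 v + min2 v := by
  have : Nontrivial (Fin K) := Fin.nontrivial_iff_two_le.mpr hK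
  obtain ⟨i, hi⟩ := Finite.exists_min v
  have : Nonempty {j : Fin K // j ≠ i} := nonempty_subtype.mpr (exists_ne i)
  obtain ⟨⟨j, hji⟩, hj⟩ := Finite.exists_min fun j : {j : Fin K // j ≠ i} => v j
  have hmin1 : v i ≤ min1 v := le_ciInf hi
  have : Nonempty {q : Fin K × Fin K // q.1 ≠ q.2} := ⟨⟨(j, i), hji⟩⟩
  have hmin2 : v j ≤ min2 v := le_ciInf fun ⟨(a, b), hab⟩ => by
    rcases eq_or_ne a i with rfl | hai
    · exact (hj ⟨b, hab.symm⟩).trans (le_max_right _ _)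
    · exact (hj ⟨a, hai⟩).trans (le_max_left _ _)
  exact ⟨i, j, hji.symm, add_le_add hmin1 hmin2⟩

lemma forall_ne_add_shift_nonneg_iff (hK : 2 ≤ K) (t : ℝ) :
    (∀ i j : Fin K, i ≠ j → 0 ≤ (v i + t) + (v j + t)) ↔ -(min1 v + min2 v) / 2 ≤ t := by
  constructor
  · intro h
    obtain ⟨i, j, hij, hle⟩ := exists_ne_add_le_min1_add_min2 v hK
    linarith [h i j hij]
  · intro ht i j hij
    linarith [min1_add_min2_le_add v hij]

end MinPairSum

theorem shiftAll_is_unique_projection {K : ℕ} (hK : 2 ≤ K) (u : EuclideanSpace ℝ (Fin K)) :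
    ((∀ i j : Fin K, i ≠ j → shiftAll u i + shiftAll u j ≥ 0) ∧
      (∀ i j : Fin K, shiftAll u i - shiftAll u j = u i - u j)) ∧
    ∀ d : EuclideanSpace ℝ (Fin K),
      ((∀ i j : Fin K, i ≠ j → d i + d j ≥ 0) ∧ (∀ i j : Fin K, d i - d j = u i - u j)) →
      ‖shiftAll u - u‖ ≤ ‖d - u‖ ∧ (‖shiftAll u - u‖ = ‖d - u‖ → d = shiftAll u) := by
  set a := -(min1 (fun i => u i) + min2 (fun i => u i)) / 2
  have hshift : ∀ k, shiftAll u k = u k + max 0 a := fun _ => rfl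
  have hfeasible := forall_ne_add_shift_nonneg_iff (fun i => u i) hK
  refine ⟨⟨fun i j hij => ?_, fun i j => by rw [hshift, hshift]; ring⟩, ?_⟩
  · rw [hshift, hshift]
    exact (hfeasible _).2 (le_max_right 0 a) i j hij
  rintro d ⟨hd_pair, hd_diff⟩
  obtain ⟨i₀⟩ : Nonempty (Fin K) := ⟨⟨0, by omega⟩⟩
  set t := d i₀ - u i₀
  have hd : ∀ k, d k = u k + t := fun k => by linarith [hd_diff k i₀]
  have ht : a ≤ t := (hfeasible t).1 fun i j hij => by
    rw [← hd, ← hd]; exact hd_pair i j hij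
  have hsqrt : 0 < √(Fintype.card (Fin K) : ℝ) := by simp; omega
  rw [EuclideanSpace.norm_sub_eq_abs_mul_sqrt_card hshift, abs_of_nonneg (le_max_left 0 a),
    EuclideanSpace.norm_sub_eq_abs_mul_sqrt_card hd]
  refine ⟨mul_le_mul_of_nonneg_right (max_zero_le_abs_of_le ht) hsqrt.le, fun h => ?_⟩
  ext k
  rw [hd, hshift, eq_max_zero_of_abs_eq ht (mul_right_cancel₀ hsqrt.ne' h)]
end
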